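/- Let 0 < ρ ≤ 1 and let W = {(1/2, ρ/4), (1/2, 3ρ/4)} ⊆ Q (two points stacked along the short direction of the board). Then there exists a set B ⊆ Q with |B| = 2 such that μ({q ∈ Q : infDist(q, B) < infDist(q, W)}) > ρ/2. (In the two-point game, Wilma loses if she stacks her two points along the short side.) -/

import Mathlib

/-!
Barney answers with `(1/2 - ρ/5, 2ρ/5)` and `(1/2 + ρ/5, 3ρ/5)`. The point reflection in the
centre of the board swaps these two points and also swaps Wilma's two points, so the claimed
region is symmetric and it suffices to show that its part in the left half `x < 1/2` has area
more than `ρ/4`. There the region is cut out by perpendicular bisectors, and it contains four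
trapezoids of total area `ρ/4 + ρ (2080 - 2049 ρ) / 17920`.
-/

open MeasureTheory Metric Set
open scoped ENNReal

noncomputable def pt (x y : ℝ) : EuclideanSpace ℝ (Fin 2) :=
  (WithLp.equiv 2 (Fin 2 → ℝ)).symm ![x, y]

def board (ρ : ℝ) : Set (EuclideanSpace ℝ (Fin 2)) :=
  {q | q 0 ∈ Set.Icc (0:ℝ) 1 ∧ q 1 ∈ Set.Icc (0:ℝ) ρ}

theorem disjoint_regionBetween_Ioo {α : Type*} [Preorder α] {f g f' g' : α → ℝ} {a b c d : α}
    (h : b ≤ c) : Disjoint (regionBetween f g (Ioo a b)) (regionBetween f' g' (Ioo c d)) :=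
  Set.disjoint_left.2 fun _ hp hq => (hp.1.2.trans_le h).not_gt hq.1.1

theorem volume_regionBetween_Ioo_eq_trapezoid {f g : ℝ → ℝ} {a b c d : ℝ} (hab : a ≤ b)
    (hf : Continuous f) (hg : Continuous g) (hfg : ∀ x ∈ Ioo a b, f x ≤ g x)
    (hgf : ∀ x, g x - f x = c + d * x) :
    volume (regionBetween f g (Ioo a b)) =
      ENNReal.ofReal ((b - a) * ((g a - f a) + (g b - f b)) / 2) := by
  rw [Measure.volume_eq_prod, volume_regionBetween_eq_integral
    (hf.integrableOn_Icc.mono_set Ioo_subset_Icc_self)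
    (hg.integrableOn_Icc.mono_set Ioo_subset_Icc_self) measurableSet_Ioo hfg,
    show g - f = fun x => c + d * x from funext hgf, hgf, hgf, ← integral_Ioc_eq_integral_Ioo,
    ← intervalIntegral.integral_of_le hab, intervalIntegral.integral_add intervalIntegrable_const
      (intervalIntegral.intervalIntegrable_id.const_mul _),
    intervalIntegral.integral_const_mul, integral_id, intervalIntegral.integral_const, smul_eq_mul]
  congr 1
  ring

theorem infDist_lt_infDist_of_forall_dist_lt {α : Type*} [PseudoMetricSpace α] {s t : Set α}
    {x y : α} (hy : y ∈ s) (ht : IsCompact t) (hne : t.Nonempty)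
    (h : ∀ z ∈ t, dist x y < dist x z) : infDist x s < infDist x t := by
  obtain ⟨z, hz, hxz⟩ := ht.exists_infDist_eq_dist hne x
  exact hxz ▸ (infDist_le_dist_of_mem hy).trans_lt (h z hz)

@[simp] lemma pt_apply_zero (x y : ℝ) : pt x y 0 = x := rfl

@[simp] lemma pt_apply_one (x y : ℝ) : pt x y 1 = y := rfl

lemma dist_pt_lt_dist_pt_iff {q : EuclideanSpace ℝ (Fin 2)} {x₁ y₁ x₂ y₂ : ℝ} :
    dist q (pt x₁ y₁) < dist q (pt x₂ y₂) ↔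
      (q 0 - x₁) ^ 2 + (q 1 - y₁) ^ 2 < (q 0 - x₂) ^ 2 + (q 1 - y₂) ^ 2 := by
  simp only [EuclideanSpace.dist_eq, Fin.sum_univ_two, Real.dist_eq, sq_abs]
  exact Real.sqrt_lt_sqrt_iff (by positivity)

noncomputable def planeEquiv : EuclideanSpace ℝ (Fin 2) ≃ᵐ ℝ × ℝ :=
  (MeasurableEquiv.toLp 2 (Fin 2 → ℝ)).symm.trans MeasurableEquiv.finTwoArrow

lemma planeEquiv_apply (q : EuclideanSpace ℝ (Fin 2)) : planeEquiv q = (q 0, q 1) := rfl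

lemma measurePreserving_planeEquiv : MeasurePreserving planeEquiv volume volume :=
  (volume_preserving_finTwoArrow ℝ).comp
    (EuclideanSpace.volume_preserving_symm_measurableEquiv_toLp (Fin 2))

noncomputable def whiteLow (ρ : ℝ) : EuclideanSpace ℝ (Fin 2) := pt (1/2) (ρ/4)

noncomputable def whiteHigh (ρ : ℝ) : EuclideanSpace ℝ (Fin 2) := pt (1/2) (3*ρ/4)

noncomputable def blackLeft (ρ : ℝ) : EuclideanSpace ℝ (Fin 2) := pt (1/2 - ρ/5) (2*ρ/5)

noncomputable def blackRight (ρ : ℝ) : EuclideanSpace ℝ (Fin 2) := pt (1/2 + ρ/5) (3*ρ/5)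

lemma blackLeft_ne_blackRight {ρ : ℝ} (hρ : 0 < ρ) : blackLeft ρ ≠ blackRight ρ := fun h => by
  have := congrArg (· 0) h
  simp only [blackLeft, blackRight, pt_apply_zero] at this
  linarith

lemma pair_black_subset_board {ρ : ℝ} (hρ₀ : 0 < ρ) (hρ₁ : ρ ≤ 1) :
    {blackLeft ρ, blackRight ρ} ⊆ board ρ := by
  rintro b (rfl | rfl) <;> refine ⟨⟨?_, ?_⟩, ?_, ?_⟩ <;>
    simp only [blackLeft, blackRight, pt_apply_zero, pt_apply_one] <;> linarith

def claimed (ρ : ℝ) (B W : Set (EuclideanSpace ℝ (Fin 2))) : Set (EuclideanSpace ℝ (Fin 2)) :=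
  {q | q ∈ board ρ ∧ infDist q B < infDist q W}

lemma mem_claimed_pair_of_dist_lt {ρ : ℝ} {B : Set (EuclideanSpace ℝ (Fin 2))}
    {q b w₁ w₂ : EuclideanSpace ℝ (Fin 2)} (hq : q ∈ board ρ) (hb : b ∈ B)
    (h₁ : dist q b < dist q w₁) (h₂ : dist q b < dist q w₂) : q ∈ claimed ρ B {w₁, w₂} := by
  refine ⟨hq, infDist_lt_infDist_of_forall_dist_lt hb (toFinite _).isCompact
    (insert_nonempty _ _) ?_⟩
  rintro z (rfl | rfl)
  exacts [h₁, h₂]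

section Bisectors

/- The boundary lines are perpendicular bisectors, e.g.
`|q - whiteLow|² - |q - blackLeft|² = (3ρ/10) (q₁ - (11ρ/24 - 2/3 + 4q₀/3))`. -/

variable {ρ : ℝ} {q : EuclideanSpace ℝ (Fin 2)}

lemma mem_claimed_of_blackLeft_wins (hρ : 0 < ρ) (hq : q ∈ board ρ)
    (h₁ : 11*ρ/24 - 2/3 + 4/3 * q 0 < q 1) (h₂ : q 1 < 29*ρ/56 + 2/7 - 4/7 * q 0) :
    q ∈ claimed ρ {blackLeft ρ, blackRight ρ} {whiteLow ρ, whiteHigh ρ} :=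
  mem_claimed_pair_of_dist_lt hq (mem_insert _ _)
    (dist_pt_lt_dist_pt_iff.2 (by nlinarith [mul_pos hρ (sub_pos.2 h₁)]))
    (dist_pt_lt_dist_pt_iff.2 (by nlinarith [mul_pos hρ (sub_pos.2 h₂)]))

lemma mem_claimed_of_blackRight_wins (hρ : 0 < ρ) (hq : q ∈ board ρ)
    (h₁ : 27*ρ/56 + 2/7 - 4/7 * q 0 < q 1) (h₂ : q 1 < 13*ρ/24 - 2/3 + 4/3 * q 0) :
    q ∈ claimed ρ {blackLeft ρ, blackRight ρ} {whiteLow ρ, whiteHigh ρ} :=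
  mem_claimed_pair_of_dist_lt hq (mem_insert_of_mem _ rfl)
    (dist_pt_lt_dist_pt_iff.2 (by nlinarith [mul_pos hρ (sub_pos.2 h₁)]))
    (dist_pt_lt_dist_pt_iff.2 (by nlinarith [mul_pos hρ (sub_pos.2 h₂)]))

end Bisectors

/-- The chord from `(0, 45ρ/56)` to `(1/2 - ρ/4, 37ρ/56)`. For every `ρ ≤ 1` it lies below both
the top edge `y = ρ` and the bisector of `blackLeft` and `whiteHigh`, so it serves as a single
affine upper boundary of the region claimed by `blackLeft`, whichever of the two is lower. -/
noncomputable def chord (ρ x : ℝ) : ℝ := 45*ρ/56 - 4*ρ/(14 - 7*ρ) * x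

section Chord

variable {ρ x : ℝ}

lemma chord_slope_mul (hρ₁ : ρ ≤ 1) : 4*ρ/(14 - 7*ρ) * (1/2 - ρ/4) = ρ/7 := by
  rw [div_mul_eq_mul_div, div_eq_iff (by linarith)]
  ring

lemma chord_slope_nonneg (hρ₀ : 0 < ρ) (hρ₁ : ρ ≤ 1) : 0 ≤ 4*ρ/(14 - 7*ρ) :=
  div_nonneg (by linarith) (by linarith)

lemma chord_mem_Icc (hρ₀ : 0 < ρ) (hρ₁ : ρ ≤ 1) (hx₀ : 0 ≤ x) (hx : x ≤ 1/2 - ρ/4) :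
    chord ρ x ∈ Icc (37*ρ/56) (45*ρ/56) := by
  have h := chord_slope_mul hρ₁
  have hm := chord_slope_nonneg hρ₀ hρ₁
  constructor <;> unfold chord <;> nlinarith [mul_le_mul_of_nonneg_left hx hm]

lemma chord_le_bisector (hρ₁ : ρ ≤ 1) (hx : x ≤ 1/2 - ρ/4) :
    chord ρ x ≤ 29*ρ/56 + 2/7 - 4/7 * x := by
  have h := chord_slope_mul hρ₁
  have hm : 4*ρ/(14 - 7*ρ) ≤ 4/7 := by
    rw [div_le_iff₀ (by linarith)]; nlinarith
  unfold chord
  nlinarith [mul_le_mul_of_nonneg_left hx (sub_nonneg.2 hm)]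

end Chord

/-- In coordinates, the part of the left half `x < 1/2` of the board claimed by the black points,
except that the `chord` cuts off a sliver at the top. -/
def leftRegion (ρ : ℝ) : Set (ℝ × ℝ) :=
  regionBetween 0 (chord ρ) (Ioo 0 (1/2 - 11*ρ/32)) ∪
  regionBetween (fun x => 11*ρ/24 - 2/3 + 4/3 * x) (chord ρ)
    (Ioo (1/2 - 11*ρ/32) (1/2 - ρ/4)) ∪
  regionBetween (fun x => 11*ρ/24 - 2/3 + 4/3 * x) (fun x => 29*ρ/56 + 2/7 - 4/7 * x)
    (Ioo (1/2 - ρ/4) (1/2 - ρ/80)) ∪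
  regionBetween (fun x => 11*ρ/24 - 2/3 + 4/3 * x) (fun x => 13*ρ/24 - 2/3 + 4/3 * x)
    (Ioo (1/2 - ρ/80) (1/2))

lemma measurableSet_leftRegion (ρ : ℝ) : MeasurableSet (leftRegion ρ) := by
  unfold leftRegion chord
  refine (((?_ : MeasurableSet _).union ?_).union ?_).union ?_ <;>
    exact measurableSet_regionBetween (by fun_prop) (by fun_prop) measurableSet_Ioo

lemma preimage_leftRegion_subset {ρ : ℝ} (hρ₀ : 0 < ρ) (hρ₁ : ρ ≤ 1) :
    planeEquiv ⁻¹' leftRegion ρ ⊆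
      claimed ρ {blackLeft ρ, blackRight ρ} {whiteLow ρ, whiteHigh ρ} ∩ {q | q 0 < 1/2} := by
  intro q hq
  simp only [leftRegion, mem_preimage, planeEquiv_apply, mem_union] at hq
  rcases hq with ((⟨⟨hx₀, hx⟩, hy₀, hy⟩ | ⟨⟨hx₀, hx⟩, hy₀, hy⟩) | ⟨⟨hx₀, hx⟩, hy₀, hy⟩) |
    ⟨⟨hx₀, hx⟩, hy₀, hy⟩ <;> dsimp only [Pi.zero_apply] at hx₀ hx hy₀ hy <;>
    refine ⟨?_, show q 0 < 1/2 by linarith⟩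
  · obtain ⟨-, hc⟩ := chord_mem_Icc hρ₀ hρ₁ hx₀.le (by linarith)
    exact mem_claimed_of_blackLeft_wins hρ₀ ⟨⟨by linarith, by linarith⟩, by linarith, by linarith⟩
      (by linarith) (hy.trans_le (chord_le_bisector hρ₁ (by linarith)))
  · obtain ⟨-, hc⟩ := chord_mem_Icc hρ₀ hρ₁ (by linarith) hx.le
    exact mem_claimed_of_blackLeft_wins hρ₀ ⟨⟨by linarith, by linarith⟩, by linarith, by linarith⟩
      hy₀ (hy.trans_le (chord_le_bisector hρ₁ hx.le))
  · exact mem_claimed_of_blackLeft_wins hρ₀ ⟨⟨by linarith, by linarith⟩, by linarith, by linarith⟩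
      hy₀ hy
  · have hq : q ∈ board ρ := ⟨⟨by linarith, by linarith⟩, by linarith, by linarith⟩
    rcases lt_or_ge (q 1) (29*ρ/56 + 2/7 - 4/7 * q 0) with hy' | hy'
    · exact mem_claimed_of_blackLeft_wins hρ₀ hq hy₀ hy'
    · exact mem_claimed_of_blackRight_wins hρ₀ hq (by linarith) hy

lemma ofReal_lt_volume_leftRegion {ρ : ℝ} (hρ₀ : 0 < ρ) (hρ₁ : ρ ≤ 1) :
    ENNReal.ofReal (ρ/4) < volume (leftRegion ρ) := by
  have hc : Continuous (chord ρ) := by unfold chord; fun_prop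
  have h₁ := volume_regionBetween_Ioo_eq_trapezoid (a := 0) (b := 1/2 - 11*ρ/32)
    (c := 45*ρ/56) (d := -(4*ρ/(14 - 7*ρ))) (f := 0) (by linarith) continuous_const hc
    (fun x hx => (chord_mem_Icc hρ₀ hρ₁ hx.1.le (by linarith [hx.2])).1.trans' (by positivity))
    (fun x => by unfold chord; simp only [Pi.zero_apply]; ring)
  have h₂ := volume_regionBetween_Ioo_eq_trapezoid (a := 1/2 - 11*ρ/32) (b := 1/2 - ρ/4)
    (c := 45*ρ/56 - (11*ρ/24 - 2/3)) (d := -(4*ρ/(14 - 7*ρ)) - 4/3)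
    (f := fun x => 11*ρ/24 - 2/3 + 4/3 * x) (by linarith) (by fun_prop) hc
    (fun x hx => (chord_mem_Icc hρ₀ hρ₁ (by linarith [hx.1]) hx.2.le).1.trans'
      (by linarith [hx.2]))
    (fun x => by unfold chord; ring)
  have h₃ := volume_regionBetween_Ioo_eq_trapezoid (a := 1/2 - ρ/4) (b := 1/2 - ρ/80)
    (c := 29*ρ/56 + 2/7 - (11*ρ/24 - 2/3)) (d := -4/7 - 4/3)
    (f := fun x => 11*ρ/24 - 2/3 + 4/3 * x) (g := fun x => 29*ρ/56 + 2/7 - 4/7 * x)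
    (by linarith) (by fun_prop) (by fun_prop) (fun x hx => by linarith [hx.2])
    (fun x => by ring)
  have h₄ := volume_regionBetween_Ioo_eq_trapezoid (a := 1/2 - ρ/80) (b := 1/2)
    (c := ρ/12) (d := 0)
    (f := fun x => 11*ρ/24 - 2/3 + 4/3 * x) (g := fun x => 13*ρ/24 - 2/3 + 4/3 * x)
    (by linarith) (by fun_prop) (by fun_prop) (fun x hx => by linarith)
    (fun x => by ring)
  rw [leftRegion,
    measure_union _ (measurableSet_regionBetween (by fun_prop) (by fun_prop) measurableSet_Ioo),
    measure_union _ (measurableSet_regionBetween (by fun_prop) (by fun_prop) measurableSet_Ioo),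
    measure_union _ (measurableSet_regionBetween (by fun_prop) hc.measurable measurableSet_Ioo),
    h₁, h₂, h₃, h₄]
  · refine lt_of_lt_of_le ?_ (ENNReal.ofReal_add_le.trans (add_le_add
      (ENNReal.ofReal_add_le.trans (add_le_add ENNReal.ofReal_add_le le_rfl)) le_rfl))
    rw [ENNReal.ofReal_lt_ofReal_iff_of_nonneg (by positivity), ← sub_pos]
    convert (show 0 < ρ * (2080 - 2049*ρ) / 17920 by nlinarith) using 1
    have : (14:ℝ) - ρ*7 ≠ 0 := by linarith
    simp only [chord, Pi.zero_apply]
    field_simp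
    ring
  · exact disjoint_regionBetween_Ioo le_rfl
  · exact (disjoint_regionBetween_Ioo (by linarith)).union_left (disjoint_regionBetween_Ioo le_rfl)
  · exact ((disjoint_regionBetween_Ioo (by linarith)).union_left
      (disjoint_regionBetween_Ioo (by linarith))).union_left (disjoint_regionBetween_Ioo le_rfl)

/-- The point reflection in the centre `(1/2, ρ/2)` of the board. -/
noncomputable def boardReflection (ρ : ℝ) : EuclideanSpace ℝ (Fin 2) ≃ᵢ EuclideanSpace ℝ (Fin 2) :=
  IsometryEquiv.subLeft (pt 1 ρ)

section Reflection

variable {ρ : ℝ}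

lemma boardReflection_apply (q : EuclideanSpace ℝ (Fin 2)) : boardReflection ρ q = pt 1 ρ - q :=
  rfl

lemma boardReflection_apply_zero (q : EuclideanSpace ℝ (Fin 2)) :
    boardReflection ρ q 0 = 1 - q 0 :=
  rfl

lemma boardReflection_apply_one (q : EuclideanSpace ℝ (Fin 2)) :
    boardReflection ρ q 1 = ρ - q 1 :=
  rfl

lemma boardReflection_pt (x y : ℝ) : boardReflection ρ (pt x y) = pt (1 - x) (ρ - y) := by
  ext i
  fin_cases i <;> rfl

lemma boardReflection_boardReflection (q : EuclideanSpace ℝ (Fin 2)) :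
    boardReflection ρ (boardReflection ρ q) = q :=
  sub_sub_cancel _ _

lemma measurePreserving_boardReflection : MeasurePreserving (boardReflection ρ) volume volume :=
  volume.measurePreserving_sub_left (pt 1 ρ)

lemma boardReflection_mem_board {q : EuclideanSpace ℝ (Fin 2)} (hq : q ∈ board ρ) :
    boardReflection ρ q ∈ board ρ := by
  obtain ⟨⟨hx₀, hx₁⟩, hy₀, hy₁⟩ := hq
  refine ⟨⟨?_, ?_⟩, ?_, ?_⟩ <;>
    simp only [boardReflection_apply_zero, boardReflection_apply_one] <;> linarith

lemma preimage_boardReflection_subset {A B W : Set (EuclideanSpace ℝ (Fin 2))}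
    (hB : boardReflection ρ '' B = B) (hW : boardReflection ρ '' W = W)
    (hA : A ⊆ claimed ρ B W ∩ {q | q 0 < 1/2}) :
    boardReflection ρ ⁻¹' A ⊆ claimed ρ B W ∩ {q | 1/2 < q 0} := by
  intro q hq
  obtain ⟨⟨hboard, hdist⟩, hx⟩ := hA hq
  refine ⟨⟨boardReflection_boardReflection q ▸ boardReflection_mem_board hboard, ?_⟩, ?_⟩
  · rwa [← hB, ← hW, infDist_image (boardReflection ρ).isometry,
      infDist_image (boardReflection ρ).isometry] at hdist
  · exact show 1/2 < q 0 by
      linarith [show boardReflection ρ q 0 < 1/2 from hx, boardReflection_apply_zero (ρ := ρ) q]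

lemma volume_add_volume_le_volume_claimed {A B W : Set (EuclideanSpace ℝ (Fin 2))}
    (hB : boardReflection ρ '' B = B) (hW : boardReflection ρ '' W = W)
    (hAm : MeasurableSet A) (hA : A ⊆ claimed ρ B W ∩ {q | q 0 < 1/2}) :
    volume A + volume A ≤ volume (claimed ρ B W) := by
  have hσA := preimage_boardReflection_subset hB hW hA
  have hdisj : Disjoint A (boardReflection ρ ⁻¹' A) := Set.disjoint_left.2 fun q h₁ h₂ =>
    lt_asymm (show q 0 < 1/2 from (hA h₁).2) (hσA h₂).2
  calc volume A + volume A = volume A + volume (boardReflection ρ ⁻¹' A) := by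
        rw [measurePreserving_boardReflection.measure_preimage hAm.nullMeasurableSet]
    _ = volume (A ∪ boardReflection ρ ⁻¹' A) :=
        (measure_union hdisj (hAm.preimage (boardReflection ρ).continuous.measurable)).symm
    _ ≤ _ := measure_mono (union_subset (fun q hq => (hA hq).1) fun q hq => (hσA hq).1)

lemma image_boardReflection_pair {a b : EuclideanSpace ℝ (Fin 2)} (h : boardReflection ρ a = b) :
    boardReflection ρ '' {a, b} = {a, b} := by
  rw [image_pair, h, ← h, boardReflection_boardReflection, pair_comm]

lemma boardReflection_whiteLow : boardReflection ρ (whiteLow ρ) = whiteHigh ρ := by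
  rw [whiteLow, whiteHigh, boardReflection_pt]
  congr 1 <;> ring

lemma boardReflection_blackLeft : boardReflection ρ (blackLeft ρ) = blackRight ρ := by
  rw [blackLeft, blackRight, boardReflection_pt]
  congr 1 <;> ring

end Reflection

/-- In the two-point game, Wilma loses if she stacks her two points along the
short side of the board: against `W = {(1/2, ρ/4), (1/2, 3ρ/4)}`, Barney can
place two points claiming strictly more than half the board. -/
theorem stmt_17 (ρ : ℝ) (hρ0 : 0 < ρ) (hρ1 : ρ ≤ 1)
    (W : Set (EuclideanSpace ℝ (Fin 2)))
    (hW : W = {pt (1/2) (ρ/4), pt (1/2) (3*ρ/4)}) :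
    ∃ B : Set (EuclideanSpace ℝ (Fin 2)), B ⊆ board ρ ∧ B.Finite ∧ B.ncard = 2 ∧
      volume {q | q ∈ board ρ ∧ infDist q B < infDist q W} > ENNReal.ofReal (ρ / 2) := by
  subst hW
  refine ⟨{blackLeft ρ, blackRight ρ}, pair_black_subset_board hρ0 hρ1, toFinite _,
    ncard_pair (blackLeft_ne_blackRight hρ0), ?_⟩
  have hA := preimage_leftRegion_subset hρ0 hρ1
  have hAm := planeEquiv.measurable (measurableSet_leftRegion ρ)
  have hvol : ENNReal.ofReal (ρ/4) < volume (planeEquiv ⁻¹' leftRegion ρ) := by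
    rw [measurePreserving_planeEquiv.measure_preimage
      (measurableSet_leftRegion ρ).nullMeasurableSet]
    exact ofReal_lt_volume_leftRegion hρ0 hρ1
  calc ENNReal.ofReal (ρ/2) = ENNReal.ofReal (ρ/4) + ENNReal.ofReal (ρ/4) := by
        rw [← ENNReal.ofReal_add (by positivity) (by positivity)]; ring_nf
    _ < volume (planeEquiv ⁻¹' leftRegion ρ) + volume (planeEquiv ⁻¹' leftRegion ρ) :=
        ENNReal.add_lt_add hvol hvol
    _ ≤ _ := volume_add_volume_le_volume_claimed
        (image_boardReflection_pair boardReflection_blackLeft)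
        (image_boardReflection_pair boardReflection_whiteLow) hAm hA
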